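/- arXiv:math/0207088 — 2 statements merged into one kernel-verified Lean document; each statement's English description precedes it below -/
import Mathlib

section
/- Let K be a number field of degree d. There exists a positive real constant c₄ depending only on K such that every point P ∈ Pⁿ(K) admits homogeneous coordinates (x₀,…,x_n) ∈ O_K^{n+1} satisfying (1/c₄) · H(P) ≤ ‖(x₀,…,x_n)‖^d ≤ c₄ · H(P). -/
open NumberField Projectivization
open scoped LinearAlgebra.Projectivization nonZeroDivisors

/-- The multiplicative projective height of a nonzero vector `x` over a number field `K`
(not normalized to be independent of `K`): the product over all places of the sup of the
local norms of the coordinates.  It equals the product over all complex embeddings of the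
sup of the absolute values of the coordinates, divided by the absolute norm of the
fractional ideal generated by the coordinates. -/
noncomputable def projHeight (K : Type*) [Field K] [NumberField K]
    {ι : Type*} [Fintype ι] (x : ι → K) : ℝ :=
  (∏ σ : K →+* ℂ, ⨆ i, ‖σ (x i)‖) /
    ((FractionalIdeal.absNorm (∑ i, FractionalIdeal.spanSingleton (𝓞 K)⁰ (x i)) : ℚ) : ℝ)

/-- The height of a point of projective space over `K`. -/
noncomputable def projHeightP (K : Type*) [Field K] [NumberField K]
    {ι : Type*} [Fintype ι] (P : ℙ K (ι → K)) : ℝ :=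
  projHeight K P.rep

/-- The Plücker coordinates of the line spanned by `a` and `b`, indexed by all pairs. -/
def plucker {K : Type*} [Field K] {n : ℕ} (a b : Fin (n + 1) → K) :
    Fin (n + 1) × Fin (n + 1) → K :=
  fun p => a p.1 * b p.2 - a p.2 * b p.1
/-- `‖x‖`: the maximum over all embeddings `σ : K → ℂ` of the maximum of the absolute
values of the coordinates of `x`. -/
noncomputable def vecNorm (K : Type*) [Field K] [NumberField K]
    {ι : Type*} [Fintype ι] (x : ι → K) : ℝ :=
  ⨆ σ : K →+* ℂ, ⨆ i, ‖σ (x i)‖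
section Aux
variable {K : Type*} [Field K] [NumberField K]
open NumberField.InfinitePlace NumberField.Units Finset

lemma prod_embeddings_eq_prod_places (f : InfinitePlace K → ℝ) :
    ∏ σ : K →+* ℂ, f (InfinitePlace.mk σ) = ∏ w : InfinitePlace K, f w ^ w.mult := by
  classical
  rw [← Finset.prod_fiberwise_of_maps_to (t := Finset.univ)
    (fun σ _ => Finset.mem_univ (InfinitePlace.mk σ)) (fun σ => f (InfinitePlace.mk σ))]
  refine Finset.prod_congr rfl fun w _ => ?_
  rw [Finset.prod_congr rfl (fun σ hσ => by rw [(Finset.mem_filter.mp hσ).2]),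
    Finset.prod_const, card_filter_mk_eq]

lemma prod_sup_eq {ι : Type*} [Fintype ι] (x : ι → K) :
    ∏ σ : K →+* ℂ, ⨆ i, ‖σ (x i)‖ =
      ∏ w : InfinitePlace K, (⨆ i, w (x i)) ^ w.mult := by
  rw [← prod_embeddings_eq_prod_places (fun w => ⨆ i, w (x i))]
  exact Finset.prod_congr rfl fun σ _ => by
    simp only [InfinitePlace.apply]

lemma vecNorm_eq_places {ι : Type*} [Fintype ι] (x : ι → K) :
    vecNorm K x = ⨆ w : InfinitePlace K, ⨆ i, w (x i) := by
  have hs : Function.Surjective (InfinitePlace.mk : (K →+* ℂ) → InfinitePlace K) :=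
    fun w => ⟨w.embedding, mk_embedding w⟩
  rw [vecNorm, ← hs.iSup_comp (g := fun w : InfinitePlace K => ⨆ i, w (x i))]
  exact iSup_congr fun σ => iSup_congr fun i => (InfinitePlace.apply σ (x i)).symm

end Aux

section Aux2
variable {K : Type*} [Field K] [NumberField K]
open NumberField.InfinitePlace NumberField.Units Finset FractionalIdeal

lemma prod_abs_embeddings (a : K) :
    ∏ σ : K →+* ℂ, ‖σ a‖ = |(Algebra.norm ℚ a : ℝ)| := by
  have := prod_embeddings_eq_prod_places (K := K) (fun w => w a)
  simp only [InfinitePlace.apply] at this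
  rw [this, prod_eq_abs_norm]
  push_cast
  rfl

lemma span_sum_mul (a : K) {ι : Type*} [Fintype ι] (x : ι → K) :
    (∑ i, spanSingleton (𝓞 K)⁰ (a * x i)) =
      spanSingleton (𝓞 K)⁰ a * ∑ i, spanSingleton (𝓞 K)⁰ (x i) := by
  rw [Finset.mul_sum]
  exact Finset.sum_congr rfl fun i _ => (spanSingleton_mul_spanSingleton a (x i)).symm

lemma projHeight_mul_left {ι : Type*} [Fintype ι] [Nonempty ι] (a : K) (ha : a ≠ 0)
    (x : ι → K) : projHeight K (fun i => a * x i) = projHeight K x := by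
  have hnum : ∏ σ : K →+* ℂ, ⨆ i, ‖σ (a * x i)‖ =
      |(Algebra.norm ℚ a : ℝ)| * ∏ σ : K →+* ℂ, ⨆ i, ‖σ (x i)‖ := by
    rw [← prod_abs_embeddings, ← Finset.prod_mul_distrib]
    refine Finset.prod_congr rfl fun σ _ => ?_
    rw [Real.mul_iSup_of_nonneg (norm_nonneg _)]
    exact iSup_congr fun i => by rw [_root_.map_mul, norm_mul]
  have hden : FractionalIdeal.absNorm (∑ i, spanSingleton (𝓞 K)⁰ (a * x i)) =
      |Algebra.norm ℚ a| * FractionalIdeal.absNorm (∑ i, spanSingleton (𝓞 K)⁰ (x i)) := by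
    rw [span_sum_mul, _root_.map_mul, absNorm_span_singleton]
  have hN : |(Algebra.norm ℚ a : ℝ)| ≠ 0 := by
    simp only [ne_eq, abs_eq_zero, Rat.cast_eq_zero]
    exact Algebra.norm_ne_zero_iff.mpr ha
  rw [projHeight, projHeight, hnum, hden]
  push_cast
  rw [mul_div_mul_left _ _ hN]

end Aux2
section Aux3
variable {K : Type*} [Field K] [NumberField K]
open NumberField.InfinitePlace NumberField.Units NumberField.Units.dirichletUnitTheorem Finset
open scoped Classical

lemma exists_unit_approx : ∃ C : ℝ, 0 ≤ C ∧
    ∀ v : ({w : InfinitePlace K // w ≠ w₀} → ℝ),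
      ∃ u : (𝓞 K)ˣ, ‖v - logEmbedding K (Additive.ofMul u)‖ ≤ C := by
  classical
  let b := Module.Basis.ofZLatticeBasis ℝ (unitLattice K) (basisUnitLattice K)
  obtain ⟨C, hC⟩ := (ZSpan.fundamentalDomain_isBounded b).exists_norm_le
  refine ⟨max C 0, le_max_right _ _, fun v => ?_⟩
  obtain ⟨l, hl, -⟩ := ZSpan.exist_unique_vadd_mem_fundamentalDomain b (-v)
  have hmem : (l : {w : InfinitePlace K // w ≠ w₀} → ℝ) ∈ unitLattice K := by
    rw [← Module.Basis.ofZLatticeBasis_span ℝ (unitLattice K) (basisUnitLattice K)]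
    exact l.2
  obtain ⟨uA, -, huA⟩ := hmem
  refine ⟨uA.toMul, ?_⟩
  have h1 : ‖(l : {w : InfinitePlace K // w ≠ w₀} → ℝ) + (-v)‖ ≤ C := hC _ hl
  have h2 : logEmbedding K (Additive.ofMul uA.toMul) =
      (l : {w : InfinitePlace K // w ≠ w₀} → ℝ) := by simpa using huA
  rw [h2]
  refine le_trans ?_ (le_max_left C 0)
  rw [← norm_neg]
  rw [show -((v : {w : InfinitePlace K // w ≠ w₀} → ℝ) - (l : {w : InfinitePlace K // w ≠ w₀} → ℝ)) =
      (l : {w : InfinitePlace K // w ≠ w₀} → ℝ) + (-v) by abel]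
  exact h1

lemma one_le_mult_real (w : InfinitePlace K) : (1 : ℝ) ≤ w.mult := by
  rw [mult]; split_ifs <;> norm_num

lemma exists_unit_balance : ∃ C : ℝ, 0 < C ∧
    ∀ S : InfinitePlace K → ℝ, (∀ w, 0 < S w) →
    ∃ u : (𝓞 K)ˣ, ∀ w : InfinitePlace K,
      (S w * w ((u : 𝓞 K) : K)) ^ (Module.finrank ℚ K) ≤
        C * ∏ w', S w' ^ w'.mult := by
  classical
  obtain ⟨C₀, hC₀, happrox⟩ := exists_unit_approx (K := K)
  set d := Module.finrank ℚ K with hd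
  have hdpos : 0 < d := Module.finrank_pos
  set κ : ℝ := (Fintype.card (InfinitePlace K) + 1) * C₀ with hκ
  have hκ0 : 0 ≤ κ := by positivity
  refine ⟨Real.exp (d * κ), Real.exp_pos _, fun S hS => ?_⟩
  set G : ℝ := (∑ w, (w.mult : ℝ) * Real.log (S w)) / d with hG
  set t : InfinitePlace K → ℝ := fun w => (w.mult : ℝ) * (G - Real.log (S w)) with ht
  have hsm : (∑ w : InfinitePlace K, (w.mult : ℝ)) = (d : ℝ) := by
    rw [← Nat.cast_sum, sum_mult_eq]
  have htsum : ∑ w, t w = 0 := by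
    simp only [ht, mul_sub]
    rw [Finset.sum_sub_distrib, ← Finset.sum_mul, hsm, hG]
    field_simp
    ring
  obtain ⟨u, hu⟩ := happrox (fun w => t w.1)
  have hsub : ∀ w : {w : InfinitePlace K // w ≠ w₀},
      |t w.1 - (w.1.mult : ℝ) * Real.log (w.1 ((u : 𝓞 K) : K))| ≤ C₀ := by
    intro w
    have h := norm_le_pi_norm ((fun w : {w : InfinitePlace K // w ≠ w₀} => t w.1)
      - logEmbedding K (Additive.ofMul u)) w
    rw [Pi.sub_apply, Real.norm_eq_abs, logEmbedding_component] at h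
    exact h.trans hu
  have hcard : (1 : ℝ) ≤ Fintype.card (InfinitePlace K) := by
    exact_mod_cast Fintype.card_pos
  have hall : ∀ w : InfinitePlace K,
      |t w - (w.mult : ℝ) * Real.log (w ((u : 𝓞 K) : K))| ≤
        (Fintype.card (InfinitePlace K)) * C₀ := by
    intro w
    by_cases hw : w = w₀
    · rw [hw]
      have hsumt : ∑ w' : {w' : InfinitePlace K // w' ≠ w₀}, t w'.1 =
          - t (w₀ : InfinitePlace K) := by
        have h1 : ∑ w' : {w' : InfinitePlace K // w' ≠ w₀}, t w'.1 =
            ∑ w' ∈ univ.erase (w₀ : InfinitePlace K), t w' := by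
          refine (Finset.sum_subtype _ (fun w' => ?_) t).symm
          exact ⟨ne_of_mem_erase, fun h => mem_erase_of_ne_of_mem h (mem_univ w')⟩
        rw [h1, eq_neg_iff_add_eq_zero, Finset.sum_erase_add univ t (mem_univ _), htsum]
      have hsumL := sum_logEmbedding_component (K := K) u
      rw [show (algebraMap (𝓞 K) K) (u : 𝓞 K) = ((u : 𝓞 K) : K) from rfl] at hsumL
      have key : t (w₀ : InfinitePlace K) - ((w₀ : InfinitePlace K).mult : ℝ) *
          Real.log ((w₀ : InfinitePlace K) ((u : 𝓞 K) : K)) =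
          - ∑ w' : {w' : InfinitePlace K // w' ≠ w₀},
            (t w'.1 - logEmbedding K (Additive.ofMul u) w') := by
        rw [Finset.sum_sub_distrib, hsumt, hsumL]
        push_cast
        ring
      rw [key, abs_neg]
      calc |∑ w' : {w' : InfinitePlace K // w' ≠ w₀},
            (t w'.1 - logEmbedding K (Additive.ofMul u) w')| ≤
          ∑ w' : {w' : InfinitePlace K // w' ≠ w₀},
            |t w'.1 - logEmbedding K (Additive.ofMul u) w'| := Finset.abs_sum_le_sum_abs _ _
        _ ≤ ∑ _w' : {w' : InfinitePlace K // w' ≠ w₀}, C₀ := by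
            refine Finset.sum_le_sum fun w' _ => ?_
            simpa [logEmbedding_component] using hsub w'
        _ = (Fintype.card {w' : InfinitePlace K // w' ≠ w₀}) * C₀ := by
            rw [Finset.sum_const, Finset.card_univ, nsmul_eq_mul]
        _ ≤ (Fintype.card (InfinitePlace K)) * C₀ := by
            refine mul_le_mul_of_nonneg_right ?_ hC₀
            exact_mod_cast Fintype.card_subtype_le _
    · refine (hsub ⟨w, hw⟩).trans ?_
      nth_rw 1 [← one_mul C₀]
      exact mul_le_mul_of_nonneg_right hcard hC₀
  have hlog : ∀ w : InfinitePlace K,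
      Real.log (S w) + Real.log (w ((u : 𝓞 K) : K)) ≤ G + κ := by
    intro w
    have h1 := hall w
    have h2 : t w - (w.mult : ℝ) * Real.log (w ((u : 𝓞 K) : K)) =
        (w.mult : ℝ) * (G - Real.log (S w) - Real.log (w ((u : 𝓞 K) : K))) := by
      rw [ht]; ring
    have h3 : |G - Real.log (S w) - Real.log (w ((u : 𝓞 K) : K))| ≤
        (Fintype.card (InfinitePlace K)) * C₀ := by
      refine le_trans ?_ h1
      rw [h2, abs_mul, abs_of_nonneg (by positivity : (0:ℝ) ≤ (w.mult : ℝ))]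
      nth_rw 1 [← one_mul |G - Real.log (S w) - Real.log (w ((u : 𝓞 K) : K))|]
      exact mul_le_mul_of_nonneg_right (one_le_mult_real w) (abs_nonneg _)
    have h4 := neg_le_of_abs_le h3
    have h5 : (Fintype.card (InfinitePlace K)) * C₀ ≤ κ := by
      rw [hκ]
      refine mul_le_mul_of_nonneg_right ?_ hC₀
      linarith
    linarith
  refine ⟨u, fun w => ?_⟩
  specialize hlog w
  have hupos : (0:ℝ) < w ((u : 𝓞 K) : K) :=
    pos_iff.mpr (Units.coe_ne_zero u)
  have hSpos := hS w
  have hprod : 0 < S w * w ((u : 𝓞 K) : K) := mul_pos hSpos hupos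
  have hpow : (S w * w ((u : 𝓞 K) : K)) ^ d =
      Real.exp ((d : ℝ) * (Real.log (S w) + Real.log (w ((u : 𝓞 K) : K)))) := by
    rw [← Real.log_mul (ne_of_gt hSpos) (ne_of_gt hupos), Real.exp_nat_mul,
      Real.exp_log hprod]
  have hexpG : Real.exp ((d : ℝ) * G) = ∏ w', S w' ^ w'.mult := by
    rw [hG, mul_div_cancel₀ _ (by exact_mod_cast hdpos.ne' : (d:ℝ) ≠ 0), Real.exp_sum]
    refine Finset.prod_congr rfl fun w' _ => ?_
    rw [Real.exp_nat_mul, Real.exp_log (hS w')]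
  calc (S w * w ((u : 𝓞 K) : K)) ^ d
      = Real.exp ((d : ℝ) * (Real.log (S w) + Real.log (w ((u : 𝓞 K) : K)))) := hpow
    _ ≤ Real.exp ((d : ℝ) * (G + κ)) := by
        refine Real.exp_le_exp.mpr ?_
        refine mul_le_mul_of_nonneg_left hlog (by positivity)
    _ = Real.exp (d * κ) * Real.exp ((d:ℝ) * G) := by
        rw [← Real.exp_add]; ring_nf
    _ = Real.exp (d * κ) * ∏ w', S w' ^ w'.mult := by rw [hexpG]

end Aux3
section Aux4
variable {K : Type*} [Field K] [NumberField K]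
open NumberField FractionalIdeal
open scoped Classical

lemma exists_integral_rep_bounded : ∃ B : ℝ, 1 ≤ B ∧
    ∀ I : FractionalIdeal (𝓞 K)⁰ K, I ≠ 0 →
      ∃ (a : K) (J : Ideal (𝓞 K)), a ≠ 0 ∧ J ≠ 0 ∧
        spanSingleton (𝓞 K)⁰ a * I = (J : FractionalIdeal (𝓞 K)⁰ K) ∧
        (Ideal.absNorm J : ℝ) ≤ B := by
  have hsurj := ClassGroup.mk0_surjective (R := 𝓞 K)
  set rep : ClassGroup (𝓞 K) → (Ideal (𝓞 K))⁰ := Function.surjInv hsurj with hrep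
  obtain ⟨B₀, hB₀⟩ := Finite.exists_le (fun c : ClassGroup (𝓞 K) =>
    (Ideal.absNorm ((rep c : Ideal (𝓞 K))) : ℝ))
  refine ⟨max B₀ 1, le_max_right _ _, fun I hI => ?_⟩
  have hnum : I.num ≠ 0 := fun h => hI (by
    rwa [FractionalIdeal.num_eq_zero_iff] at h)
  have hnum' : I.num ∈ (Ideal (𝓞 K))⁰ :=
    mem_nonZeroDivisors_iff_ne_zero.mpr hnum
  set c := ClassGroup.mk0 (⟨I.num, hnum'⟩ : (Ideal (𝓞 K))⁰) with hc
  have hmk : ClassGroup.mk0 (rep c) = c := Function.surjInv_eq hsurj c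
  obtain ⟨x, hx, hxeq⟩ := (ClassGroup.mk0_eq_mk0_iff_exists_fraction_ring
    (K := K)).mp (hc ▸ hmk.symm)
  have hden : spanSingleton (𝓞 K)⁰ ((algebraMap (𝓞 K) K) I.den) * I =
      (I.num : FractionalIdeal (𝓞 K)⁰ K) := den_mul_self_eq_num' _ _ I
  refine ⟨x * (algebraMap (𝓞 K) K) I.den, rep c, ?_, ?_, ?_, ?_⟩
  · refine mul_ne_zero hx ?_
    exact RingOfIntegers.coe_ne_zero_iff.mpr (nonZeroDivisors.coe_ne_zero _)
  · exact nonZeroDivisors.coe_ne_zero _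
  · rw [← spanSingleton_mul_spanSingleton, mul_assoc, hden]
    exact hxeq
  · exact (hB₀ c).trans (le_max_left _ _)

end Aux4

/-- There is a constant `c₄ > 0` depending only on the number field `K` (of degree `d`
over `ℚ`) such that every point `P ∈ ℙⁿ(K)` admits homogeneous coordinates
`(x₀, …, x_n)` with entries in `𝓞 K` satisfying
`(1/c₄) H(P) ≤ ‖(x₀, …, x_n)‖^d ≤ c₄ H(P)`. -/
theorem integral_coordinates_norm_comparable_to_height
    (K : Type*) [Field K] [NumberField K] :
    ∃ c₄ : ℝ, 0 < c₄ ∧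
      ∀ (n : ℕ) (P : ℙ K (Fin (n + 1) → K)),
        ∃ (x : Fin (n + 1) → K) (hx : x ≠ 0),
          (∀ i, IsIntegral ℤ (x i)) ∧ Projectivization.mk K x hx = P ∧
          (1 / c₄) * projHeightP K P ≤ vecNorm K x ^ Module.finrank ℚ K ∧
          vecNorm K x ^ Module.finrank ℚ K ≤ c₄ * projHeightP K P := by
  classical
  obtain ⟨C, hC, hbal⟩ := exists_unit_balance (K := K)
  obtain ⟨B, hB, hrep⟩ := exists_integral_rep_bounded (K := K)
  refine ⟨max 1 (C * B), lt_of_lt_of_le one_pos (le_max_left _ _), fun n P => ?_⟩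
  set c₄ : ℝ := max 1 (C * B) with hc₄
  have hc₄1 : 1 ≤ c₄ := le_max_left _ _
  set d := Module.finrank ℚ K with hd
  have hdpos : 0 < d := Module.finrank_pos
  set y : Fin (n+1) → K := P.rep with hy
  have hy0 : y ≠ 0 := P.rep_nonzero
  set 𝔞 : FractionalIdeal (𝓞 K)⁰ K :=
    ∑ i, FractionalIdeal.spanSingleton (𝓞 K)⁰ (y i) with h𝔞
  obtain ⟨i₀, hi₀⟩ := Function.ne_iff.mp hy0
  rw [Pi.zero_apply] at hi₀
  have hmem : ∀ j, y j ∈ 𝔞 := fun j => by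
    have h1 : FractionalIdeal.spanSingleton (𝓞 K)⁰ (y j) ≤ 𝔞 := by
      rw [h𝔞, ← Finset.add_sum_erase _ _ (Finset.mem_univ j),
        ← FractionalIdeal.sup_eq_add]
      exact le_sup_left
    exact h1 (FractionalIdeal.mem_spanSingleton_self _ _)
  have h𝔞0 : 𝔞 ≠ 0 := fun h => by
    have := hmem i₀
    rw [h] at this
    exact hi₀ ((FractionalIdeal.mem_zero_iff _).mp this)
  obtain ⟨a, J, ha, hJ, hspan, hJB⟩ := hrep 𝔞 h𝔞0
  set z : Fin (n+1) → K := fun i => a * y i with hz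
  have hz₀ : z i₀ ≠ 0 := mul_ne_zero ha hi₀
  set S : InfinitePlace K → ℝ := fun w => ⨆ i, w (z i) with hS
  have hSpos : ∀ w, 0 < S w := fun w => by
    show 0 < ⨆ i, w (z i)
    exact lt_of_lt_of_le (InfinitePlace.pos_iff.mpr hz₀)
      (le_ciSup (f := fun i => w (z i)) (Finite.bddAbove_range _) i₀)
  obtain ⟨u, hu⟩ := hbal S hSpos
  set x : Fin (n+1) → K := fun i => ((u : 𝓞 K) : K) * z i with hx
  have hxy : x = fun i => (((u : 𝓞 K) : K) * a) * y i := by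
    funext i; rw [hx, hz]; ring
  have hux : ((u : 𝓞 K) : K) ≠ 0 := NumberField.Units.coe_ne_zero u
  have hx0 : x ≠ 0 := fun h => by
    have := congrFun h i₀
    rw [Pi.zero_apply, hx] at this
    exact (mul_ne_zero hux hz₀) this
  -- membership of z i in J
  have hzJ : ∀ i, z i ∈ (J : FractionalIdeal (𝓞 K)⁰ K) := fun i => by
    rw [← hspan]
    exact FractionalIdeal.mul_mem_mul
      (FractionalIdeal.mem_spanSingleton_self _ a) (hmem i)
  have hint : ∀ i, IsIntegral ℤ (x i) := fun i => by
    obtain ⟨b, hbJ, hbeq⟩ := (FractionalIdeal.mem_coeIdeal _).mp (hzJ i)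
    have : x i = algebraMap (𝓞 K) K ((u : 𝓞 K) * b) := by
      rw [map_mul, hbeq]
    rw [this]
    exact NumberField.RingOfIntegers.isIntegral_coe _
  have hmk : Projectivization.mk K x hx0 = P := by
    rw [← Projectivization.mk_rep P]
    refine (Projectivization.mk_eq_mk_iff K x P.rep hx0 P.rep_nonzero).mpr ?_
    refine ⟨Units.mk0 (((u : 𝓞 K) : K) * a) (mul_ne_zero hux ha), ?_⟩
    funext i
    rw [Pi.smul_apply, Units.smul_def, smul_eq_mul, Units.val_mk0]
    exact (congrFun hxy i).symm
  -- height identities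
  have hHeq : projHeight K x = projHeightP K P := by
    rw [hxy, projHeightP, projHeight_mul_left _ (mul_ne_zero hux ha) P.rep]
  set Pd : ℝ := ∏ w : InfinitePlace K, S w ^ w.mult with hPd
  have hPdpos : 0 < Pd := Finset.prod_pos fun w _ => pow_pos (hSpos w) _
  have hS' : ∀ w : InfinitePlace K, (⨆ i, w (x i)) = w ((u : 𝓞 K) : K) * S w := by
    intro w
    rw [hS, Real.mul_iSup_of_nonneg (apply_nonneg w _)]
    exact iSup_congr fun i => by rw [hx, map_mul]
  have hNu : (∏ w : InfinitePlace K, (w ((u : 𝓞 K) : K)) ^ w.mult) = 1 := by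
    rw [InfinitePlace.prod_eq_abs_norm, NumberField.Units.norm, Rat.cast_one]
  have hnum : (∏ σ : K →+* ℂ, ⨆ i, ‖σ (x i)‖) = Pd := by
    rw [prod_sup_eq]
    calc ∏ w : InfinitePlace K, (⨆ i, w (x i)) ^ w.mult
        = ∏ w : InfinitePlace K, ((w ((u : 𝓞 K) : K)) ^ w.mult * S w ^ w.mult) := by
          refine Finset.prod_congr rfl fun w _ => ?_
          rw [hS' w, mul_pow]
      _ = (∏ w : InfinitePlace K, (w ((u : 𝓞 K) : K)) ^ w.mult) * Pd := by
          rw [Finset.prod_mul_distrib, hPd]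
      _ = Pd := by rw [hNu, one_mul]
  have hden : ((FractionalIdeal.absNorm
      (∑ i, FractionalIdeal.spanSingleton (𝓞 K)⁰ (x i)) : ℚ) : ℝ) =
      (Ideal.absNorm J : ℝ) := by
    have h1 : (∑ i, FractionalIdeal.spanSingleton (𝓞 K)⁰ (x i)) =
        FractionalIdeal.spanSingleton (𝓞 K)⁰ ((u : 𝓞 K) : K) *
          (J : FractionalIdeal (𝓞 K)⁰ K) := by
      calc (∑ i, FractionalIdeal.spanSingleton (𝓞 K)⁰ (x i))
          = FractionalIdeal.spanSingleton (𝓞 K)⁰ ((u : 𝓞 K) : K) *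
            ∑ i, FractionalIdeal.spanSingleton (𝓞 K)⁰ (z i) := span_sum_mul _ z
        _ = _ := by rw [show (∑ i, FractionalIdeal.spanSingleton (𝓞 K)⁰ (z i)) =
              FractionalIdeal.spanSingleton (𝓞 K)⁰ a * 𝔞 from span_sum_mul a y, hspan]
    rw [h1, _root_.map_mul, FractionalIdeal.absNorm_span_singleton,
      NumberField.Units.norm, FractionalIdeal.coeIdeal_absNorm, one_mul]
    push_cast
    rfl
  have hH : projHeightP K P = Pd / (Ideal.absNorm J : ℝ) := by
    rw [← hHeq, projHeight, hnum, hden]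
  have hNJ1 : (1 : ℝ) ≤ (Ideal.absNorm J : ℝ) := by
    have : 1 ≤ Ideal.absNorm J := Nat.one_le_iff_ne_zero.mpr
      (Ideal.absNorm_ne_zero_iff_mem_nonZeroDivisors.mpr
        (mem_nonZeroDivisors_iff_ne_zero.mpr hJ))
    exact_mod_cast this
  have hHpos : 0 < projHeightP K P := by
    rw [hH]; positivity
  -- lower bound
  have hvec_nonneg_arg : ∀ σ : K →+* ℂ, 0 ≤ ⨆ i, ‖σ (x i)‖ := fun σ =>
    le_trans (norm_nonneg _)
      (le_ciSup (f := fun i => ‖σ (x i)‖) (Finite.bddAbove_range _) i₀)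
  have hle_vec : ∀ σ : K →+* ℂ, (⨆ i, ‖σ (x i)‖) ≤ vecNorm K x := fun σ =>
    le_ciSup (f := fun σ : K →+* ℂ => ⨆ i, ‖σ (x i)‖)
      (Finite.bddAbove_range _) σ
  have hlow : Pd ≤ vecNorm K x ^ d := by
    rw [← hnum]
    calc (∏ σ : K →+* ℂ, ⨆ i, ‖σ (x i)‖)
        ≤ ∏ _σ : K →+* ℂ, vecNorm K x :=
          Finset.prod_le_prod (fun σ _ => hvec_nonneg_arg σ) (fun σ _ => hle_vec σ)
      _ = vecNorm K x ^ d := by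
          rw [Finset.prod_const, Finset.card_univ, NumberField.Embeddings.card K ℂ]
  have hlower : (1 / c₄) * projHeightP K P ≤ vecNorm K x ^ d := by
    have h1 : (1 / c₄) * projHeightP K P ≤ projHeightP K P := by
      nth_rw 2 [← one_mul (projHeightP K P)]
      refine mul_le_mul_of_nonneg_right ?_ hHpos.le
      rw [div_le_one (lt_of_lt_of_le one_pos hc₄1)]
      exact hc₄1
    have h2 : projHeightP K P ≤ Pd := by
      rw [hH]
      exact div_le_self hPdpos.le hNJ1
    linarith
  -- upper bound
  have hupper : vecNorm K x ^ d ≤ c₄ * projHeightP K P := by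
    rw [vecNorm_eq_places]
    obtain ⟨w₁, hw₁⟩ := exists_eq_ciSup_of_finite
      (f := fun w : InfinitePlace K => ⨆ i, w (x i))
    rw [← hw₁, hS' w₁, mul_comm]
    have h1 := hu w₁
    have hNJpos : (0:ℝ) < (Ideal.absNorm J : ℝ) := lt_of_lt_of_le one_pos hNJ1
    have h2 : Pd ≤ projHeightP K P * B := by
      rw [hH]
      calc Pd = Pd / (Ideal.absNorm J : ℝ) * (Ideal.absNorm J : ℝ) :=
            (div_mul_cancel₀ _ hNJpos.ne').symm
        _ ≤ Pd / (Ideal.absNorm J : ℝ) * B :=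
            mul_le_mul_of_nonneg_left hJB (div_nonneg hPdpos.le hNJpos.le)
    calc (S w₁ * w₁ ((u : 𝓞 K) : K)) ^ d ≤ C * Pd := h1
      _ ≤ C * (projHeightP K P * B) := mul_le_mul_of_nonneg_left h2 hC.le
      _ = (C * B) * projHeightP K P := by ring
      _ ≤ c₄ * projHeightP K P :=
          mul_le_mul_of_nonneg_right (le_max_right _ _) hHpos.le
  exact ⟨x, hx0, hint, hmk, hlower, hupper⟩
end

section
/- Let K be a number field with ring of integers O_K, and fix a finite set 𝒥 of integral ideals of O_K containing exactly one representative of each ideal class of K. Then every point P ∈ Pⁿ(K) admits homogeneous coordinates x₀,…,x_n ∈ O_K such that the ideal generated by x₀,…,x_n belongs to 𝒥; moreover this representation is unique up to simultaneous multiplication of all coordinates by a unit of O_K: if (x₀,…,x_n) and (y₀,…,y_n) are two such coordinate vectors for the same point P, then there is a unit ε ∈ O_K^× with y_i = ε x_i for all i. -/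
open NumberField Projectivization
open scoped LinearAlgebra.Projectivization nonZeroDivisors

lemma span_singleton_mul_span_range {R : Type*} [CommSemiring R] {ι : Type*} (a : R) (x : ι → R) :
    Ideal.span {a} * Ideal.span (Set.range x) = Ideal.span (Set.range fun i => a * x i) := by
  rw [Ideal.span_mul_span', Set.singleton_mul, ← Set.range_comp]
  rfl


/-- Two nonzero integral ideals of the ring of integers lie in the same ideal class
iff they agree up to multiplication by nonzero principal ideals. -/
def idealSameClass (K : Type*) [Field K] [NumberField K] (I J : Ideal (𝓞 K)) : Prop :=
  ∃ a b : 𝓞 K, a ≠ 0 ∧ b ≠ 0 ∧ Ideal.span {a} * I = Ideal.span {b} * J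
/-- Fix a finite set `𝒥` of nonzero integral ideals of `𝓞 K` containing exactly one
representative of each ideal class.  Every point `P ∈ ℙⁿ(K)` admits homogeneous
coordinates in `𝓞 K` generating an ideal belonging to `𝒥`, and such coordinates are
unique up to simultaneous multiplication by a unit of `𝓞 K`. -/
theorem coordinates_with_ideal_in_class_reps (K : Type*) [Field K] [NumberField K]
    (𝒥 : Finset (Ideal (𝓞 K)))
    (h1 : ∀ I ∈ 𝒥, I ≠ ⊥)
    (h2 : ∀ I : Ideal (𝓞 K), I ≠ ⊥ → ∃! J, J ∈ 𝒥 ∧ idealSameClass K I J)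
    (n : ℕ) (P : ℙ K (Fin (n + 1) → K)) :
    (∃ (x : Fin (n + 1) → 𝓞 K) (hx : (fun i => (algebraMap (𝓞 K) K (x i))) ≠ 0),
        Projectivization.mk K _ hx = P ∧ Ideal.span (Set.range x) ∈ 𝒥) ∧
    (∀ (x y : Fin (n + 1) → 𝓞 K)
        (hx : (fun i => (algebraMap (𝓞 K) K (x i))) ≠ 0)
        (hy : (fun i => (algebraMap (𝓞 K) K (y i))) ≠ 0),
        Projectivization.mk K _ hx = P → Projectivization.mk K _ hy = P →
        Ideal.span (Set.range x) ∈ 𝒥 → Ideal.span (Set.range y) ∈ 𝒥 →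
        ∃ ε : (𝓞 K)ˣ, ∀ i, y i = ε * x i) := by
  have injA : Function.Injective (algebraMap (𝓞 K) K) :=
    IsFractionRing.injective (𝓞 K) K
  constructor
  · -- existence
    have hrep : P.rep ≠ 0 := Projectivization.rep_nonzero P
    obtain ⟨d, hd⟩ := IsLocalization.exist_integer_multiples_of_finite ((𝓞 K)⁰) P.rep
    have hd' : ∀ i, ∃ c : 𝓞 K, algebraMap (𝓞 K) K c = (d : 𝓞 K) • P.rep i := fun i => hd i
    choose x₀ hx₀ using hd'
    have hdK : algebraMap (𝓞 K) K (d : 𝓞 K) ≠ 0 := by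
      simpa using (injA.ne_iff.2 (nonZeroDivisors.coe_ne_zero d))
    have hx₀0 : ∃ i, x₀ i ≠ 0 := by
      by_contra h
      push_neg at h
      apply hrep
      funext i
      have := hx₀ i
      rw [h i, map_zero, Algebra.smul_def] at this
      exact (mul_eq_zero.1 this.symm).resolve_left hdK
    have hI₀ : Ideal.span (Set.range x₀) ≠ ⊥ := by
      obtain ⟨i, hi⟩ := hx₀0
      intro h
      exact hi (Ideal.span_eq_bot.1 h _ ⟨i, rfl⟩)
    obtain ⟨J, ⟨hJ𝒥, a, b, ha, hb, hab⟩, -⟩ := h2 _ hI₀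
    have key : ∀ i, ∃ c : 𝓞 K, a * x₀ i = b * c := by
      intro i
      have h1 : a * x₀ i ∈ Ideal.span {a} * Ideal.span (Set.range x₀) :=
        Ideal.mul_mem_mul (Ideal.mem_span_singleton_self a)
          (Ideal.subset_span ⟨i, rfl⟩)
      rw [hab] at h1
      have h2' : a * x₀ i ∈ Ideal.span ({b} : Set (𝓞 K)) := Ideal.mul_le_left h1
      exact Ideal.mem_span_singleton'.1 h2' |>.imp fun c hc => by
        rw [← hc]; ring
    choose x hxdef using key
    have hbK : algebraMap (𝓞 K) K b ≠ 0 := by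
      simpa using injA.ne_iff.2 hb
    have haK : algebraMap (𝓞 K) K a ≠ 0 := by
      simpa using injA.ne_iff.2 ha
    have hranges : (Set.range fun i => b * x i) = Set.range fun i => a * x₀ i := by
      rw [show (fun i => b * x i) = fun i => a * x₀ i from funext fun i => (hxdef i).symm]
    have hspan : Ideal.span (Set.range x) = J := by
      have hc : Ideal.span {b} * Ideal.span (Set.range x) = Ideal.span {b} * J := by
        rw [span_singleton_mul_span_range, hranges, ← span_singleton_mul_span_range, hab]
      have hbI : Ideal.span ({b} : Set (𝓞 K)) ≠ 0 := fun h => hb (by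
        simpa [Ideal.zero_eq_bot, Ideal.span_singleton_eq_bot] using h)
      exact mul_left_cancel₀ hbI hc
    have hx : (fun i => (algebraMap (𝓞 K) K (x i))) ≠ 0 := by
      intro h
      obtain ⟨i, hi⟩ := hx₀0
      have hxi : x i = 0 := injA (by simpa using congrFun h i)
      have := hxdef i
      rw [hxi, mul_zero] at this
      exact hi ((mul_eq_zero.1 this).resolve_left ha)
    refine ⟨x, hx, ?_, hspan ▸ hJ𝒥⟩
    rw [← P.mk_rep]
    rw [Projectivization.mk_eq_mk_iff']
    refine ⟨algebraMap (𝓞 K) K a * algebraMap (𝓞 K) K (d : 𝓞 K) / algebraMap (𝓞 K) K b, ?_⟩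
    funext i
    have e1 : algebraMap (𝓞 K) K b * algebraMap (𝓞 K) K (x i) =
        algebraMap (𝓞 K) K a * (algebraMap (𝓞 K) K (d : 𝓞 K) * P.rep i) := by
      rw [← map_mul, ← hxdef i, map_mul, hx₀ i, Algebra.smul_def]
    show _ * P.rep i = algebraMap (𝓞 K) K (x i)
    field_simp
    linear_combination -e1
  · -- uniqueness
    intro x y hx hy hmx hmy hIx hIy
    have hxy := hmx.trans hmy.symm
    obtain ⟨u, hu⟩ := (Projectivization.mk_eq_mk_iff K _ _ hx hy).1 hxy
    obtain ⟨a, b, hbmem, hab⟩ := IsFractionRing.div_surjective (A := 𝓞 K) (u : K)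
    have hb : b ≠ 0 := nonZeroDivisors.ne_zero hbmem
    have hbK : algebraMap (𝓞 K) K b ≠ 0 := by simpa using injA.ne_iff.2 hb
    have haK : algebraMap (𝓞 K) K a ≠ 0 := by
      intro h
      rw [h, zero_div] at hab
      exact u.ne_zero hab.symm
    have ha : a ≠ 0 := fun h => haK (by rw [h, map_zero])
    have hrel : ∀ i, b * x i = a * y i := by
      intro i
      apply injA
      have hui : (u : K) * algebraMap (𝓞 K) K (y i) = algebraMap (𝓞 K) K (x i) := by
        have := congrFun hu i
        simpa [Units.smul_def] using this
      rw [← hab] at hui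
      rw [map_mul, map_mul]
      field_simp at hui
      linear_combination -hui
    have hIxne : Ideal.span (Set.range x) ≠ ⊥ := h1 _ hIx
    obtain ⟨J, hJ, hJu⟩ := h2 _ hIxne
    have e1 : Ideal.span (Set.range x) = J :=
      hJu _ ⟨hIx, 1, 1, one_ne_zero, one_ne_zero, rfl⟩
    have hsame : idealSameClass K (Ideal.span (Set.range x)) (Ideal.span (Set.range y)) := by
      refine ⟨b, a, hb, ha, ?_⟩
      rw [span_singleton_mul_span_range, span_singleton_mul_span_range,
        show (fun i => b * x i) = fun i => a * y i from funext fun i => hrel i]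
    have e2 : Ideal.span (Set.range y) = J := hJu _ ⟨hIy, hsame⟩
    have e3 : Ideal.span (Set.range x) = Ideal.span (Set.range y) := e1.trans e2.symm
    have hc : Ideal.span {b} * Ideal.span (Set.range x) =
        Ideal.span {a} * Ideal.span (Set.range x) := by
      conv_rhs => rw [e3]
      rw [span_singleton_mul_span_range, span_singleton_mul_span_range,
        show (fun i => b * x i) = fun i => a * y i from funext fun i => hrel i]
    have hIne0 : Ideal.span (Set.range x) ≠ 0 := by rwa [Ideal.zero_eq_bot]
    have hsp : Ideal.span ({b} : Set (𝓞 K)) = Ideal.span {a} :=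
      mul_right_cancel₀ hIne0 hc
    obtain ⟨ε, hε⟩ := Ideal.span_singleton_eq_span_singleton.1 hsp
    -- hε : b * ε = a
    refine ⟨ε⁻¹, fun i => ?_⟩
    have hthis : b * x i = b * (↑ε * y i) := by
      have := hrel i
      rw [← hε] at this
      rw [this]; ring
    have h4 : x i = ↑ε * y i := mul_left_cancel₀ hb hthis
    rw [h4, ← mul_assoc, Units.inv_mul, one_mul]
end
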